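/- arXiv:1003.4630 — 3 statements merged into one kernel-verified Lean document; each statement's English description precedes it below -/
import Mathlib

section
/- Let (X,d) be a metric space and FS(X) the set of generalized geodesics with d_FS(c,d) := ∫_ℝ d(c(t),d(t))/(2e^{|t|}) dt. Then d_FS is a metric on FS(X). -/
open Metric Real MeasureTheory Set

variable {X : Type*}

/-- Witness data for a generalized geodesic: `c` is locally constant outside the
interval `(a, b)` and restricts to an isometric embedding on `[a, b]`. -/
def GenGeodesicWitness [MetricSpace X] (c : ℝ → X) (a b : EReal) : Prop :=
  a ≤ b ∧ a ≠ ⊤ ∧ b ≠ ⊥ ∧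
    (∀ s t : ℝ, (s : EReal) ≤ a → (t : EReal) ≤ a → c s = c t) ∧
    (∀ s t : ℝ, b ≤ (s : EReal) → b ≤ (t : EReal) → c s = c t) ∧
    (∀ s t : ℝ, a ≤ (s : EReal) → (s : EReal) ≤ b → a ≤ (t : EReal) → (t : EReal) ≤ b →
      dist (c s) (c t) = |s - t|)

def IsGenGeodesic [MetricSpace X] (c : ℝ → X) : Prop := ∃ a b : EReal, GenGeodesicWitness c a b

/-- The metric of the flow space `FS(X)`. -/
noncomputable def fsDist [MetricSpace X] (c d : ℝ → X) : ℝ :=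
  ∫ t : ℝ, dist (c t) (d t) / (2 * Real.exp |t|)

/-!
A generalized geodesic is `1`-Lipschitz: given `s ≤ t`, moving `s` up and `t` down into the
interval `[a, b]` where the geodesic is isometric does not change the values, since it is
constant on either side. Hence `dist (c t) (d t)` grows at most linearly in `|t|`, so the
integrand of `fsDist` is `O(|t| e^{-|t|})` and integrable; the triangle inequality then follows
by monotonicity of the integral, and since the integrand is continuous and nonnegative, a
vanishing integral forces `c = d`.
-/

open Filter Asymptotics

namespace GenGeodesicWitness

variable [MetricSpace X] {c : ℝ → X} {a b : EReal}

lemma exists_mem_Icc_lower_le (h : GenGeodesicWitness c a b) {s t : ℝ} (hst : s ≤ t)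
    (hat : a ≤ t) :
    ∃ s' ∈ Icc s t, a ≤ s' ∧ c s' = c s := by
  induction a with
  | bot => exact ⟨s, ⟨le_rfl, hst⟩, bot_le, rfl⟩
  | top => exact (h.2.1 rfl).elim
  | coe α =>
    obtain ⟨-, -, -, hleft, -, -⟩ := h
    norm_cast at hat
    refine ⟨max s α, ⟨le_max_left _ _, max_le hst hat⟩, by exact_mod_cast le_max_right _ _, ?_⟩
    rcases le_total s α with hsα | hαs
    · rw [max_eq_right hsα]
      exact hleft _ _ le_rfl (by exact_mod_cast hsα)
    · rw [max_eq_left hαs]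

lemma exists_mem_Icc_le_upper (h : GenGeodesicWitness c a b) {s t : ℝ} (hst : s ≤ t)
    (hsb : s ≤ b) :
    ∃ t' ∈ Icc s t, t' ≤ b ∧ c t' = c t := by
  induction b with
  | bot => exact (h.2.2.1 rfl).elim
  | top => exact ⟨t, ⟨hst, le_rfl⟩, le_top, rfl⟩
  | coe β =>
    obtain ⟨-, -, -, -, hright, -⟩ := h
    norm_cast at hsb
    refine ⟨min t β, ⟨le_min hst hsb, min_le_left _ _⟩, by exact_mod_cast min_le_right _ _, ?_⟩
    rcases le_total t β with htβ | hβt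
    · rw [min_eq_left htβ]
    · rw [min_eq_right hβt]
      exact hright _ _ le_rfl (by exact_mod_cast hβt)

lemma dist_le_sub (h : GenGeodesicWitness c a b) {s t : ℝ} (hst : s ≤ t) :
    dist (c s) (c t) ≤ t - s := by
  have ⟨_, _, _, hleft, hright, hiso⟩ := h
  by_cases hta : (t : EReal) ≤ a
  · rw [hleft s t ((EReal.coe_le_coe_iff.2 hst).trans hta) hta, dist_self]
    linarith
  obtain ⟨s', ⟨hss', hs't⟩, has', hcs'⟩ := h.exists_mem_Icc_lower_le hst (not_le.1 hta).le
  by_cases hbs' : b ≤ (s' : EReal)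
  · rw [← hcs', hright s' t hbs' (hbs'.trans (EReal.coe_le_coe_iff.2 hs't)), dist_self]
    linarith
  obtain ⟨t', ⟨hs't', ht't⟩, ht'b, hct'⟩ := h.exists_mem_Icc_le_upper hs't (not_le.1 hbs').le
  calc dist (c s) (c t) = |s' - t'| := by
        rw [← hcs', ← hct', hiso s' t' has' (not_le.1 hbs').le
          (has'.trans (EReal.coe_le_coe_iff.2 hs't')) ht'b]
    _ ≤ t - s := by rw [abs_sub_comm, abs_of_nonneg (by linarith)]; linarith

end GenGeodesicWitness

lemma IsGenGeodesic.lipschitzWith [MetricSpace X] {c : ℝ → X} (hc : IsGenGeodesic c) :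
    LipschitzWith 1 c := by
  obtain ⟨a, b, h⟩ := hc
  refine LipschitzWith.of_dist_le_mul fun s t => ?_
  rw [NNReal.coe_one, one_mul, Real.dist_eq]
  rcases le_total s t with hst | hts
  · simpa [abs_of_nonpos (sub_nonpos.2 hst)] using h.dist_le_sub hst
  · simpa [dist_comm, abs_of_nonneg (sub_nonneg.2 hts)] using h.dist_le_sub hts

lemma integrable_mul_abs_add_mul_exp_neg_abs (A B : ℝ) :
    Integrable fun t : ℝ => (A * |t| + B) * exp (-|t|) := by
  have hcont : Continuous fun t : ℝ => (A * |t| + B) * exp (-|t|) := by fun_prop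
  refine hcont.locallyIntegrable.integrable_of_isBigO_atTop_of_norm_isNegInvariant
    (g := fun t => exp (-(1 / 2) * t)) (by simp [Function.comp_def]) ?_
    ⟨Ioi 0, Ioi_mem_atTop 0, exp_neg_integrableOn_Ioi 0 one_half_pos⟩
  have hlin : (fun t : ℝ => exp (-t) * t ^ (1 : ℝ)) =O[atTop] fun t => exp (-(1 / 2) * t) :=
    (Gamma_integrand_isLittleO 1).isBigO
  have hconst : (fun t : ℝ => exp (-t)) =O[atTop] fun t => exp (-(1 / 2) * t) := by
    refine IsBigO.of_bound 1 ?_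
    filter_upwards [eventually_ge_atTop 0] with t ht
    simp only [norm_eq_abs, abs_exp, one_mul, exp_le_exp]
    linarith
  refine ((hlin.const_mul_left A).add (hconst.const_mul_left B)).congr' ?_ EventuallyEq.rfl
  filter_upwards [eventually_ge_atTop 0] with t ht
  rw [rpow_one, abs_of_nonneg ht]
  ring

section LipschitzCurves

variable [MetricSpace X] {c d e : ℝ → X} {K L : NNReal}

lemma LipschitzWith.dist_le_mul_abs_add (hc : LipschitzWith K c) (hd : LipschitzWith L d)
    (t : ℝ) : dist (c t) (d t) ≤ (K + L) * |t| + dist (c 0) (d 0) := by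
  have hct : dist (c t) (c 0) ≤ K * |t| := by simpa using hc.dist_le_mul t 0
  have hdt : dist (d 0) (d t) ≤ L * |t| := by simpa using hd.dist_le_mul 0 t
  calc dist (c t) (d t) ≤ dist (c t) (c 0) + dist (c 0) (d 0) + dist (d 0) (d t) :=
        dist_triangle4 _ _ _ _
    _ ≤ (K + L) * |t| + dist (c 0) (d 0) := by linarith

lemma continuous_dist_div_two_mul_exp_abs (hc : Continuous c) (hd : Continuous d) :
    Continuous fun t : ℝ => dist (c t) (d t) / (2 * exp |t|) :=
  (hc.dist hd).div (by fun_prop) fun t => by positivity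

lemma integrable_dist_div_two_mul_exp_abs (hc : LipschitzWith K c) (hd : LipschitzWith L d) :
    Integrable fun t : ℝ => dist (c t) (d t) / (2 * exp |t|) := by
  refine (integrable_mul_abs_add_mul_exp_neg_abs ((K + L) / 2) (dist (c 0) (d 0) / 2)).mono'
    (continuous_dist_div_two_mul_exp_abs hc.continuous hd.continuous).aestronglyMeasurable
    (Eventually.of_forall fun t => ?_)
  rw [norm_of_nonneg (by positivity), exp_neg, div_le_iff₀ (by positivity)]
  have := hc.dist_le_mul_abs_add hd t
  field_simp
  linarith

lemma fsDist_nonneg : 0 ≤ fsDist c d :=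
  integral_nonneg fun t => by positivity

lemma fsDist_comm : fsDist c d = fsDist d c := by
  simp only [fsDist, dist_comm]

lemma fsDist_self : fsDist c c = 0 := by
  simp [fsDist]

lemma fsDist_eq_zero_iff (hc : LipschitzWith K c) (hd : LipschitzWith L d) :
    fsDist c d = 0 ↔ c = d := by
  refine ⟨fun h => funext fun t => ?_, fun h => h ▸ fsDist_self⟩
  have hae := (integral_eq_zero_iff_of_nonneg (fun t => by positivity)
    (integrable_dist_div_two_mul_exp_abs hc hd)).1 h
  have hzero := congrFun ((continuous_dist_div_two_mul_exp_abs hc.continuous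
    hd.continuous).ae_eq_iff_eq volume continuous_zero |>.1 hae) t
  rw [Pi.zero_apply, div_eq_zero_iff, dist_eq_zero] at hzero
  exact hzero.resolve_right (by positivity)

lemma fsDist_triangle (hc : LipschitzWith K c) (hd : LipschitzWith L d)
    {M : NNReal} (he : LipschitzWith M e) : fsDist c e ≤ fsDist c d + fsDist d e := by
  have hcd := integrable_dist_div_two_mul_exp_abs hc hd
  have hde := integrable_dist_div_two_mul_exp_abs hd he
  rw [fsDist, fsDist, fsDist, ← integral_add hcd hde]
  refine integral_mono (integrable_dist_div_two_mul_exp_abs hc he) (hcd.add hde) fun t => ?_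
  rw [← add_div]
  gcongr
  exact dist_triangle _ _ _

end LipschitzCurves

/-- `d_FS` is a metric on the set of generalized geodesics: it is nonnegative,
vanishes precisely on equal geodesics, is symmetric, and satisfies the
triangle inequality. -/
theorem fsDist_is_metric [MetricSpace X] :
    (∀ c d : ℝ → X, IsGenGeodesic c → IsGenGeodesic d → 0 ≤ fsDist c d) ∧
    (∀ c d : ℝ → X, IsGenGeodesic c → IsGenGeodesic d → (fsDist c d = 0 ↔ c = d)) ∧
    (∀ c d : ℝ → X, IsGenGeodesic c → IsGenGeodesic d → fsDist c d = fsDist d c) ∧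
    (∀ c d e : ℝ → X, IsGenGeodesic c → IsGenGeodesic d → IsGenGeodesic e →
      fsDist c e ≤ fsDist c d + fsDist d e) :=
  ⟨fun _ _ _ _ => fsDist_nonneg,
    fun _ _ hc hd => fsDist_eq_zero_iff hc.lipschitzWith hd.lipschitzWith,
    fun _ _ _ _ => fsDist_comm,
    fun _ _ _ hc hd he => fsDist_triangle hc.lipschitzWith hd.lipschitzWith he.lipschitzWith⟩
end

section
/- Let X be a metric space. The set FS(X) of generalized geodesics is closed in the space of all maps ℝ → X under uniform convergence on compact subsets: if a sequence of generalized geodesics converges uniformly on compact subsets to a map f : ℝ → X, then f is a generalized geodesic. -/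
open Metric Real MeasureTheory Set

variable {X : Type*}

/-- Projection of `ℝ` onto the interval `[a,b]` of `EReal`, as a real number. -/
noncomputable def eProj (a b : EReal) (x : ℝ) : ℝ := (min (max (x : EReal) a) b).toReal

lemma eProj_lt_top (a b : EReal) (x : ℝ) (ha : a ≠ ⊤) :
    min (max (x : EReal) a) b < ⊤ :=
  lt_of_le_of_lt (min_le_left _ _) (max_lt (EReal.coe_lt_top x) ha.lt_top)

lemma eProj_bot_lt (a b : EReal) (x : ℝ) (hb : b ≠ ⊥) :
    ⊥ < min (max (x : EReal) a) b :=
  lt_min (lt_of_lt_of_le (EReal.bot_lt_coe x) (le_max_left _ _)) hb.bot_lt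

lemma eProj_coe (a b : EReal) (x : ℝ) (ha : a ≠ ⊤) (hb : b ≠ ⊥) :
    (eProj a b x : EReal) = min (max (x : EReal) a) b :=
  EReal.coe_toReal (eProj_lt_top a b x ha).ne (eProj_bot_lt a b x hb).ne'

lemma eProj_mem (a b : EReal) (x : ℝ) (hab : a ≤ b) (ha : a ≠ ⊤) (hb : b ≠ ⊥) :
    a ≤ (eProj a b x : EReal) ∧ (eProj a b x : EReal) ≤ b := by
  rw [eProj_coe a b x ha hb]
  exact ⟨le_min (le_max_right _ _) hab, min_le_right _ _⟩

lemma eProj_of_mem (a b : EReal) (x : ℝ) (hax : a ≤ (x : EReal)) (hxb : (x : EReal) ≤ b) :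
    eProj a b x = x := by
  rw [eProj, max_eq_left hax, min_eq_left hxb, EReal.toReal_coe]

/-- Forward direction: a geodesic witness gives the projection formula for distances. -/
lemma dist_eq_of_witness [MetricSpace X] {c : ℝ → X} {a b : EReal}
    (h : GenGeodesicWitness c a b) (s t : ℝ) :
    dist (c s) (c t) = |eProj a b s - eProj a b t| := by
  obtain ⟨hab, ha, hb, hla, hlb, hiso⟩ := h
  have key : ∀ x : ℝ, c x = c (eProj a b x) := by
    intro x
    rcases le_total (x : EReal) a with hx | hx
    · apply hla x _ hx
      rw [eProj_coe a b x ha hb, max_eq_right hx, min_eq_left hab]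
    · rcases le_total (x : EReal) b with hx' | hx'
      · rw [eProj_of_mem a b x hx hx']
      · apply hlb x _ hx'
        rw [eProj_coe a b x ha hb, min_eq_right (le_trans hx' (le_max_left _ _))]
  rw [key s, key t]
  exact hiso _ _ (eProj_mem a b s hab ha hb).1 (eProj_mem a b s hab ha hb).2
    (eProj_mem a b t hab ha hb).1 (eProj_mem a b t hab ha hb).2

/-- Converse: the projection formula for distances gives a geodesic witness. -/
lemma witness_of_dist_eq [MetricSpace X] {c : ℝ → X} {a b : EReal}
    (hab : a ≤ b) (ha : a ≠ ⊤) (hb : b ≠ ⊥)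
    (h : ∀ s t : ℝ, dist (c s) (c t) = |eProj a b s - eProj a b t|) :
    GenGeodesicWitness c a b := by
  have projle : ∀ x : ℝ, (x : EReal) ≤ a → eProj a b x = a.toReal := by
    intro x hx
    rw [eProj, max_eq_right hx, min_eq_left hab]
  have projge : ∀ x : ℝ, b ≤ (x : EReal) → eProj a b x = b.toReal := by
    intro x hx
    rw [eProj, min_eq_right (le_trans hx (le_max_left _ _))]
  refine ⟨hab, ha, hb, ?_, ?_, ?_⟩
  · intro s t hs ht
    have := h s t
    rw [projle s hs, projle t ht, sub_self, abs_zero] at this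
    exact dist_eq_zero.mp this
  · intro s t hs ht
    have := h s t
    rw [projge s hs, projge t ht, sub_self, abs_zero] at this
    exact dist_eq_zero.mp this
  · intro s t has hsb hat htb
    rw [h s t, eProj_of_mem a b s has hsb, eProj_of_mem a b t hat htb]

lemma isGenGeodesic_const [MetricSpace X] {c : ℝ → X} (h : ∀ s t : ℝ, c s = c t) :
    IsGenGeodesic c := by
  refine ⟨0, 0, le_refl _, by simp, by simp, fun s t _ _ => h s t, fun s t _ _ => h s t,
    fun s t hs hs' ht ht' => ?_⟩
  have hs0 : s = 0 := by exact_mod_cast le_antisymm (by exact_mod_cast hs') (by exact_mod_cast hs)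
  have ht0 : t = 0 := by exact_mod_cast le_antisymm (by exact_mod_cast ht') (by exact_mod_cast ht)
  rw [hs0, ht0, sub_self, abs_zero, dist_self]

/-- The set of generalized geodesics is closed under uniform convergence on
compact subsets: if generalized geodesics `cs n` converge uniformly on every
compact subset of `ℝ` to `f`, then `f` is a generalized geodesic. -/
theorem isGenGeodesic_of_locallyUniform_limit [MetricSpace X]
    (cs : ℕ → ℝ → X) (f : ℝ → X)
    (hcs : ∀ n, IsGenGeodesic (cs n))
    (hconv : ∀ K : Set ℝ, IsCompact K → TendstoUniformlyOn cs f Filter.atTop K) :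
    IsGenGeodesic f := by
  -- pointwise convergence
  have hpt : ∀ x : ℝ, Filter.Tendsto (fun n => cs n x) Filter.atTop (nhds (f x)) := by
    intro x
    exact (hconv {x} isCompact_singleton).tendsto_at (mem_singleton x)
  -- choose witnesses
  choose A B hW using hcs
  -- subsequence with convergent witnesses
  obtain ⟨p, -, φ, hφ, hcv⟩ := IsCompact.tendsto_subseq (x := fun n => (A n, B n))
    (isCompact_univ (X := EReal × EReal)) (fun n => mem_univ _)
  set a := p.1
  set b := p.2
  have hA : Filter.Tendsto (fun k => A (φ k)) Filter.atTop (nhds a) :=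
    ((continuous_fst.tendsto p).comp hcv)
  have hB : Filter.Tendsto (fun k => B (φ k)) Filter.atTop (nhds b) :=
    ((continuous_snd.tendsto p).comp hcv)
  have hdist : ∀ s t : ℝ, Filter.Tendsto
      (fun k => dist (cs (φ k) s) (cs (φ k) t)) Filter.atTop (nhds (dist (f s) (f t))) :=
    fun s t => ((hpt s).comp (hφ.tendsto_atTop)).dist ((hpt t).comp (hφ.tendsto_atTop))
  by_cases ha : a = ⊤
  · -- degenerate: f is constant
    apply isGenGeodesic_const
    intro s t
    have hev : ∀ᶠ k in Filter.atTop, dist (cs (φ k) s) (cs (φ k) t) = 0 := by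
      have : ∀ᶠ k in Filter.atTop, ((max s t : ℝ) : EReal) < A (φ k) :=
        Filter.Tendsto.eventually_const_lt (by rw [ha]; exact EReal.coe_lt_top _) hA
      filter_upwards [this] with k hk
      rw [dist_eq_of_witness (hW (φ k)) s t]
      have h1 : eProj (A (φ k)) (B (φ k)) s = eProj (A (φ k)) (B (φ k)) t := by
        rw [eProj, eProj, max_eq_right (le_of_lt (lt_of_le_of_lt (by exact_mod_cast le_max_left s t) hk)),
          max_eq_right (le_of_lt (lt_of_le_of_lt (by exact_mod_cast le_max_right s t) hk))]
      rw [h1, sub_self, abs_zero]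
    have : Filter.Tendsto (fun k => dist (cs (φ k) s) (cs (φ k) t)) Filter.atTop (nhds 0) :=
      Filter.Tendsto.congr' (Filter.EventuallyEq.symm hev) tendsto_const_nhds
    exact dist_eq_zero.mp (tendsto_nhds_unique (hdist s t) this)
  · by_cases hb : b = ⊥
    · apply isGenGeodesic_const
      intro s t
      have hev : ∀ᶠ k in Filter.atTop, dist (cs (φ k) s) (cs (φ k) t) = 0 := by
        have : ∀ᶠ k in Filter.atTop, B (φ k) < ((min s t : ℝ) : EReal) :=
          Filter.Tendsto.eventually_lt_const (by rw [hb]; exact EReal.bot_lt_coe _) hB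
        filter_upwards [this] with k hk
        rw [dist_eq_of_witness (hW (φ k)) s t]
        have hmins : B (φ k) ≤ max (s : EReal) (A (φ k)) :=
          le_trans (le_of_lt (lt_of_lt_of_le hk (by exact_mod_cast min_le_left s t))) (le_max_left _ _)
        have hmint : B (φ k) ≤ max (t : EReal) (A (φ k)) :=
          le_trans (le_of_lt (lt_of_lt_of_le hk (by exact_mod_cast min_le_right s t))) (le_max_left _ _)
        have h1 : eProj (A (φ k)) (B (φ k)) s = eProj (A (φ k)) (B (φ k)) t := by
          rw [eProj, eProj, min_eq_right hmins, min_eq_right hmint]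
        rw [h1, sub_self, abs_zero]
      have : Filter.Tendsto (fun k => dist (cs (φ k) s) (cs (φ k) t)) Filter.atTop (nhds 0) :=
        Filter.Tendsto.congr' (Filter.EventuallyEq.symm hev) tendsto_const_nhds
      exact dist_eq_zero.mp (tendsto_nhds_unique (hdist s t) this)
    · -- main case
      have hab : a ≤ b :=
        le_of_tendsto_of_tendsto' hA hB (fun k => (hW (φ k)).1)
      have hproj : ∀ x : ℝ, Filter.Tendsto (fun k => eProj (A (φ k)) (B (φ k)) x)
          Filter.atTop (nhds (eProj a b x)) := by
        intro x
        have h1 : Filter.Tendsto (fun k => min (max (x : EReal) (A (φ k))) (B (φ k)))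
            Filter.atTop (nhds (min (max (x : EReal) a) b)) :=
          (Filter.Tendsto.max tendsto_const_nhds hA).min hB
        exact (EReal.tendsto_toReal (eProj_lt_top a b x ha).ne (eProj_bot_lt a b x hb).ne').comp h1
      refine ⟨a, b, witness_of_dist_eq hab ha hb ?_⟩
      intro s t
      have h2 : Filter.Tendsto (fun k => dist (cs (φ k) s) (cs (φ k) t)) Filter.atTop
          (nhds (|eProj a b s - eProj a b t|)) := by
        have : Filter.Tendsto (fun k => |eProj (A (φ k)) (B (φ k)) s - eProj (A (φ k)) (B (φ k)) t|)
            Filter.atTop (nhds (|eProj a b s - eProj a b t|)) :=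
          ((hproj s).sub (hproj t)).abs
        exact this.congr (fun k => (dist_eq_of_witness (hW (φ k)) s t).symm)
      exact tendsto_nhds_unique (hdist s t) h2
end

section
/- Let Z be a metric space with an isometric action of a group H, and let A ⊆ Z be an H-invariant subspace. For ∅ ≠ U ⊊ A define Z(U) := {z ∈ Z : d(z,U) < d(z, A\U)}, and Z(A) := Z, Z(∅) := ∅. Then for all U, V ⊆ A: (1) Z(U) is open in Z; (2) Z(U ∩ V) = Z(U) ∩ Z(V); (3) Z(U) ∩ A = U if and only if U is open in A; (4) Z(gU) = g·Z(U) for all g ∈ H. -/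
open Metric Set

attribute [local instance] Classical.propDecidable

/-- The extension `Z(U)` of a subset `U` of `A` to an open subset of `Z`:
`Z(∅) = ∅`, `Z(A) = Z`, and otherwise
`Z(U) = {z | d(z,U) < d(z, A \ U)}`. -/
noncomputable def extSet {Z : Type*} [MetricSpace Z] (A U : Set Z) : Set Z :=
  if U = ∅ then ∅
  else if U = A then Set.univ
  else {z : Z | Metric.infDist z U < Metric.infDist z (A \ U)}

/-! `Z(U)` is open because `infDist` is continuous, and isometries transport every distance
involved. Since `d(z, U)` decreases and `d(z, A \ U)` increases with `U`, the map `U ↦ Z(U)` is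
monotone, which gives `Z(U ∩ V) ⊆ Z(U) ∩ Z(V)`. Conversely, if `z ∈ Z(U) ∩ Z(V)` and, say,
`d(z, A \ U) ≤ d(z, A \ V)`, a point `u ∈ U` with `d(z, u) < d(z, A \ U)` cannot lie in `A \ V`;
so `u ∈ U ∩ V` and
`d(z, U ∩ V) ≤ d(z, u) < d(z, A \ U) = min (d(z, A \ U)) (d(z, A \ V)) = d(z, A \ (U ∩ V))`.
A relatively open `U` lies in `Z(U)` because its points have positive distance to `A \ U`. -/

namespace Metric

variable {Z : Type*} [MetricSpace Z] {s t : Set Z} {x : Z}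

theorem infDist_union (hs : s.Nonempty) (ht : t.Nonempty) :
    infDist x (s ∪ t) = min (infDist x s) (infDist x t) := by
  simp only [infDist, infEDist_union,
    ENNReal.toReal_min (infEDist_ne_top hs) (infEDist_ne_top ht)]

end Metric

section extSet

variable {Z : Type*} [MetricSpace Z] {A U V : Set Z}

@[simp]
theorem extSet_empty (A : Set Z) : extSet A ∅ = ∅ := by
  simp [extSet]

theorem extSet_self (hA : A.Nonempty) : extSet A A = univ := by
  simp [extSet, hA.ne_empty]

theorem extSet_eq_setOf (hU : U.Nonempty) (hUA : U ≠ A) :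
    extSet A U = {z | infDist z U < infDist z (A \ U)} := by
  simp [extSet, hU.ne_empty, hUA]

theorem isOpen_extSet (A U : Set Z) : IsOpen (extSet A U) := by
  unfold extSet
  split_ifs
  · exact isOpen_empty
  · exact isOpen_univ
  · exact isOpen_lt (continuous_infDist_pt U) (continuous_infDist_pt (A \ U))

theorem extSet_mono (hUV : U ⊆ V) (hV : V ⊆ A) : extSet A U ⊆ extSet A V := by
  rcases U.eq_empty_or_nonempty with rfl | hU
  · simp
  rcases hV.eq_or_ssubset with rfl | hVA
  · simp [extSet_self (hU.mono hUV)]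
  have hUA : U ≠ A := fun h => hVA.ne (hV.antisymm (h ▸ hUV))
  rw [extSet_eq_setOf hU hUA, extSet_eq_setOf (hU.mono hUV) hVA.ne]
  intro z hz
  calc infDist z V ≤ infDist z U := infDist_le_infDist_of_subset hUV hU
    _ < infDist z (A \ U) := hz
    _ ≤ infDist z (A \ V) :=
      infDist_le_infDist_of_subset (sdiff_subset_sdiff_right hUV) (nonempty_of_ssubset hVA)

theorem mem_extSet_inter_of_le {z : Z} (hUA : U ⊂ A) (hU : U.Nonempty) (hAV : (A \ V).Nonempty)
    (hzU : infDist z U < infDist z (A \ U)) (hle : infDist z (A \ U) ≤ infDist z (A \ V)) :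
    z ∈ extSet A (U ∩ V) := by
  obtain ⟨u, huU, hu⟩ := (infDist_lt_iff hU).1 hzU
  have huV : u ∈ V := by
    by_contra huV
    exact (infDist_le_dist_of_mem (mem_sdiff_of_mem (hUA.subset huU) huV)).not_gt
      (hu.trans_le hle)
  have hUVA : U ∩ V ≠ A := fun h => hUA.ne (hUA.subset.antisymm (h ▸ inter_subset_left))
  have hdist : infDist z (A \ (U ∩ V)) = infDist z (A \ U) := by
    rw [sdiff_inter, infDist_union (nonempty_of_ssubset hUA) hAV, min_eq_left hle]
  rw [extSet_eq_setOf (U := U ∩ V) ⟨u, huU, huV⟩ hUVA, mem_ofPred_eq, hdist]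
  exact (infDist_le_dist_of_mem (mem_inter huU huV)).trans_lt hu

theorem extSet_inter (hU : U ⊆ A) (hV : V ⊆ A) :
    extSet A (U ∩ V) = extSet A U ∩ extSet A V := by
  refine (subset_inter (extSet_mono inter_subset_left hU)
    (extSet_mono inter_subset_right hV)).antisymm ?_
  rintro z ⟨hzU, hzV⟩
  rcases U.eq_empty_or_nonempty with rfl | hUne
  · simp at hzU
  rcases V.eq_empty_or_nonempty with rfl | hVne
  · simp at hzV
  rcases hU.eq_or_ssubset with rfl | hUA
  · rwa [inter_eq_right.2 hV]
  rcases hV.eq_or_ssubset with rfl | hVA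
  · rwa [inter_eq_left.2 hU]
  rw [extSet_eq_setOf hUne hUA.ne] at hzU
  rw [extSet_eq_setOf hVne hVA.ne] at hzV
  rcases le_total (infDist z (A \ U)) (infDist z (A \ V)) with hle | hle
  · exact mem_extSet_inter_of_le hUA hUne (nonempty_of_ssubset hVA) hzU hle
  · rw [inter_comm]
    exact mem_extSet_inter_of_le hVA hVne (nonempty_of_ssubset hUA) hzV hle

theorem extSet_inter_subset (A U : Set Z) : extSet A U ∩ A ⊆ U := by
  rintro z ⟨hz, hzA⟩
  by_contra hzU
  rcases U.eq_empty_or_nonempty with rfl | hU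
  · simp at hz
  rw [extSet_eq_setOf hU fun h => hzU (h ▸ hzA), mem_ofPred_eq,
    infDist_zero_of_mem (mem_sdiff_of_mem hzA hzU)] at hz
  exact hz.not_ge infDist_nonneg

theorem subset_extSet_of_isOpen {O : Set Z} (hO : IsOpen O) (hUO : U = O ∩ A) :
    U ⊆ extSet A U := by
  intro u hu
  rcases (hUO ▸ inter_subset_right : U ⊆ A).eq_or_ssubset with rfl | hUA
  · simp [extSet_self ⟨u, hu⟩]
  have hdisj : Disjoint O (A \ U) :=
    disjoint_left.2 fun x hxO hx => hx.2 (hUO ▸ ⟨hxO, hx.1⟩)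
  have hu_closure : u ∉ closure (A \ U) :=
    (hdisj.closure_right hO).notMem_of_mem_left (hUO ▸ hu).1
  rw [extSet_eq_setOf ⟨u, hu⟩ hUA.ne, mem_ofPred_eq, infDist_zero_of_mem hu]
  exact (infDist_pos_iff_notMem_closure (nonempty_of_ssubset hUA)).1 hu_closure

theorem extSet_inter_self_eq_iff (hU : U ⊆ A) :
    extSet A U ∩ A = U ↔ ∃ O : Set Z, IsOpen O ∧ U = O ∩ A :=
  ⟨fun h => ⟨_, isOpen_extSet A U, h.symm⟩, fun ⟨_, hO, hUO⟩ =>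
    (extSet_inter_subset A U).antisymm (subset_inter (subset_extSet_of_isOpen hO hUO) hU)⟩

theorem extSet_image {Z' : Type*} [MetricSpace Z'] (e : Z ≃ᵢ Z') (A U : Set Z) :
    extSet (e '' A) (e '' U) = e '' extSet A U := by
  have hinfDist : ∀ (z : Z') (S : Set Z), infDist z (e '' S) = infDist (e.symm z) S := by
    intro z S
    rw [← infDist_image e.isometry, e.apply_symm_apply]
  simp only [extSet, image_eq_empty, e.injective.image_injective.eq_iff,
    ← image_sdiff e.injective]
  split_ifs
  · exact (image_empty e).symm
  · exact e.surjective.range_eq.symm.trans image_univ.symm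
  · ext z
    simp only [mem_ofPred_eq, hinfDist]
    rw [← e.preimage_symm]
    rfl

end extSet

/-- Properties of the extension `U ↦ Z(U)`: each `Z(U)` is open,
`Z(U ∩ V) = Z(U) ∩ Z(V)`, `Z(U) ∩ A = U` iff `U` is open in `A`, and
`Z(gU) = g·Z(U)` for an isometric action leaving `A` invariant. -/
theorem extSet_properties {Z H : Type*} [MetricSpace Z] [Group H] [MulAction H Z]
    (hiso : ∀ h : H, Isometry (fun w : Z => h • w))
    (A : Set Z) (hA : ∀ h : H, (fun w => h • w) '' A = A) :
    (∀ U : Set Z, U ⊆ A → IsOpen (extSet A U)) ∧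
    (∀ U V : Set Z, U ⊆ A → V ⊆ A →
      extSet A (U ∩ V) = extSet A U ∩ extSet A V) ∧
    (∀ U : Set Z, U ⊆ A →
      (extSet A U ∩ A = U ↔ ∃ O : Set Z, IsOpen O ∧ U = O ∩ A)) ∧
    (∀ U : Set Z, U ⊆ A → ∀ h : H,
      extSet A ((fun w => h • w) '' U) = (fun w => h • w) '' extSet A U) := by
  refine ⟨fun U _ => isOpen_extSet A U, fun U V => extSet_inter,
    fun U => extSet_inter_self_eq_iff, fun U _ h => ?_⟩
  let e : Z ≃ᵢ Z := { MulAction.toPerm h with isometry_toFun := hiso h }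
  have := extSet_image e A U
  rwa [show ⇑e = fun w => h • w from rfl, hA h] at this
end
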